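/- arXiv:2109.14674 — 4 statements merged into one kernel-verified Lean document; each statement's English description precedes it below -/
import Mathlib

section
/- If F : Ω → ℝ ⊕ ℝi ⊕ ℝj is a C¹ reduced quaternion-valued function on a connected open set Ω ⊆ ℝ², λ ∈ ℝ \ {0}, F satisfies DF + λF = 0, and the scalar part of F is constant on Ω, then F is identically zero. -/
/-- The quaternionic imaginary unit `i`. -/
def quatI : Quaternion ℝ := ⟨0, 1, 0, 0⟩

/-- The quaternionic imaginary unit `j`. -/
def quatJ : Quaternion ℝ := ⟨0, 0, 1, 0⟩

/-- The quaternionic Dirac operator `D = i ∂/∂x + j ∂/∂y` acting on the left. -/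
noncomputable def diracD (F : ℝ × ℝ → Quaternion ℝ) (p : ℝ × ℝ) : Quaternion ℝ :=
  quatI * fderiv ℝ F p (1, 0) +
    quatJ * fderiv ℝ F p (0, 1)

/-!
Write `F = f₀ + f₁ i + f₂ j + f₃ k`. The `i`- and `j`-parts of `DF` involve only derivatives
of `f₀` and `f₃`, which vanish because `f₀` is constant and `f₃ = 0` on the open set `Ω`; so
the `i`- and `j`-parts of `DF + λF = 0` read `λ f₁ = λ f₂ = 0`. Then the scalar part of `DF`,
`-(∂ₓ f₁ + ∂_y f₂)`, vanishes as well, and the scalar part of the equation reads `λ f₀ = 0`.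
-/

open Filter Topology
open scoped Quaternion

section

variable {𝕜 E F G : Type*} [NontriviallyNormedField 𝕜]
  [NormedAddCommGroup E] [NormedSpace 𝕜 E]
  [NormedAddCommGroup F] [NormedSpace 𝕜 F] [NormedAddCommGroup G] [NormedSpace 𝕜 G]

theorem ContinuousLinearMap.comp_fderiv_eq_zero_of_eventually_const (L : F →L[𝕜] G)
    {f : E → F} {x : E} {c : G} (h : ∀ᶠ y in 𝓝 x, L (f y) = c) :
    L.comp (fderiv 𝕜 f x) = 0 := by
  by_cases hf : DifferentiableAt 𝕜 f x
  · have hLf : (L ∘ f) =ᶠ[𝓝 x] fun _ => c := h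
    rw [← L.fderiv, ← fderiv_comp x L.differentiableAt hf, hLf.fderiv_eq, fderiv_const_apply]
  · rw [fderiv_zero_of_not_differentiableAt hf, ContinuousLinearMap.comp_zero]

theorem LinearMap.map_fderiv_apply_eq_zero_of_isOpen [CompleteSpace 𝕜] [FiniteDimensional 𝕜 F]
    (ℓ : F →ₗ[𝕜] G) {f : E → F} {s : Set E} (hs : IsOpen s) {c : G}
    (h : ∀ y ∈ s, ℓ (f y) = c) {x : E} (hx : x ∈ s) (v : E) :
    ℓ (fderiv 𝕜 f x v) = 0 :=
  congrArg (· v) <| (LinearMap.toContinuousLinearMap ℓ).comp_fderiv_eq_zero_of_eventually_const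
    (eventually_of_mem (hs.mem_nhds hx) h)

end

section

variable (F : ℝ × ℝ → Quaternion ℝ) (p : ℝ × ℝ)

theorem re_diracD :
    (diracD F p).re = -(fderiv ℝ F p (1, 0)).imI - (fderiv ℝ F p (0, 1)).imJ := by
  simp only [diracD, Quaternion.re_add, Quaternion.re_mul]
  simp [quatI, quatJ]
  ring

theorem imI_diracD :
    (diracD F p).imI = (fderiv ℝ F p (1, 0)).re + (fderiv ℝ F p (0, 1)).imK := by
  simp only [diracD, Quaternion.imI_add, Quaternion.imI_mul]
  simp [quatI, quatJ]

theorem imJ_diracD :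
    (diracD F p).imJ = (fderiv ℝ F p (0, 1)).re - (fderiv ℝ F p (1, 0)).imK := by
  simp only [diracD, Quaternion.imJ_add, Quaternion.imJ_mul]
  simp [quatI, quatJ]
  ring

end

theorem metamonogenic_const_scalar_eq_zero_general (Ω : Set (ℝ × ℝ)) (hΩ : IsOpen Ω)
    (lam : ℝ) (hlam : lam ≠ 0)
    (F : ℝ × ℝ → Quaternion ℝ)
    (hred : ∀ p ∈ Ω, (F p).imK = 0)
    (hmeta : ∀ p ∈ Ω, diracD F p + lam • F p = 0)
    (hconst : ∃ c : ℝ, ∀ p ∈ Ω, (F p).re = c) :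
    ∀ p ∈ Ω, F p = 0 := by
  obtain ⟨c, hc⟩ := hconst
  have hre : ∀ p ∈ Ω, ∀ v, (fderiv ℝ F p v).re = 0 := fun p hp v =>
    (QuaternionAlgebra.reₗ ..).map_fderiv_apply_eq_zero_of_isOpen (f := F) hΩ hc hp v
  have himK : ∀ p ∈ Ω, ∀ v, (fderiv ℝ F p v).imK = 0 := fun p hp v =>
    (QuaternionAlgebra.imKₗ ..).map_fderiv_apply_eq_zero_of_isOpen (f := F) hΩ hred hp v
  have himI : ∀ p ∈ Ω, (F p).imI = 0 := fun p hp => by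
    simpa [imI_diracD, hre p hp, himK p hp, hlam] using
      congrArg QuaternionAlgebra.imI (hmeta p hp)
  have himJ : ∀ p ∈ Ω, (F p).imJ = 0 := fun p hp => by
    simpa [imJ_diracD, hre p hp, himK p hp, hlam] using
      congrArg QuaternionAlgebra.imJ (hmeta p hp)
  intro p hp
  have hdI : ∀ v, (fderiv ℝ F p v).imI = 0 :=
    (QuaternionAlgebra.imIₗ ..).map_fderiv_apply_eq_zero_of_isOpen (f := F) hΩ himI hp
  have hdJ : ∀ v, (fderiv ℝ F p v).imJ = 0 :=
    (QuaternionAlgebra.imJₗ ..).map_fderiv_apply_eq_zero_of_isOpen (f := F) hΩ himJ hp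
  have hre0 : (F p).re = 0 := by
    simpa [re_diracD, hdI, hdJ, hlam] using
      congrArg QuaternionAlgebra.re (hmeta p hp)
  ext <;> simp [hre0, himI p hp, himJ p hp, hred p hp]

/-- If `F` is a `C¹` reduced quaternion-valued `λ`-metamonogenic function
(`DF + λF = 0`, `λ ≠ 0`) on a connected open set `Ω ⊆ ℝ²` whose scalar part is
constant on `Ω`, then `F` vanishes identically on `Ω`. -/
theorem metamonogenic_const_scalar_eq_zero (Ω : Set (ℝ × ℝ)) (hΩ : IsOpen Ω)
    (hconn : IsConnected Ω) (lam : ℝ) (hlam : lam ≠ 0)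
    (F : ℝ × ℝ → Quaternion ℝ) (hF : ContDiffOn ℝ 1 F Ω)
    (hred : ∀ p ∈ Ω, (F p).imK = 0)
    (hmeta : ∀ p ∈ Ω, diracD F p + lam • F p = 0)
    (hconst : ∃ c : ℝ, ∀ p ∈ Ω, (F p).re = c) :
    ∀ p ∈ Ω, F p = 0 :=
  metamonogenic_const_scalar_eq_zero_general Ω hΩ lam hlam F hred hmeta hconst
end

section
/- For a reduced quaternion-valued C¹ function F on an open set Ω ⊆ ℝ², the equation DF + λF = 0 holds if and only if FD + λF = 0, where FD denotes applying the Dirac operator from the right (i.e. (∂F/∂x)i + (∂F/∂y)j). -/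
/-- The quaternionic Dirac operator acting on the left: `DF = i ∂F/∂x + j ∂F/∂y`. -/
noncomputable def diracDLeft (F : ℝ × ℝ → Quaternion ℝ) (p : ℝ × ℝ) : Quaternion ℝ :=
  quatI * fderiv ℝ F p (1, 0) +
    quatJ * fderiv ℝ F p (0, 1)

/-- The quaternionic Dirac operator acting on the right: `FD = (∂F/∂x)i + (∂F/∂y)j`. -/
noncomputable def diracDRight (F : ℝ × ℝ → Quaternion ℝ) (p : ℝ × ℝ) : Quaternion ℝ :=
  fderiv ℝ F p (1, 0) * quatI +
    fderiv ℝ F p (0, 1) * quatJ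

/-! For `u, v` without `k`-component, `i u + j v` and `u i + v j` agree in the real, `i`- and
`j`-components and have opposite `k`-components; as `λF` has no `k`-component either,
`i u + j v + λF = 0` iff `u i + v j + λF = 0`. The partial derivatives of a reduced `F` are again
reduced, because `imK ∘ F` vanishes near every point of the open set `Ω`. -/

open Filter Topology

theorem ContinuousLinearMap.apply_fderiv_eq_zero_of_eventually {𝕜 E G H : Type*}
    [NontriviallyNormedField 𝕜] [NormedAddCommGroup E] [NormedSpace 𝕜 E]
    [NormedAddCommGroup G] [NormedSpace 𝕜 G] [NormedAddCommGroup H] [NormedSpace 𝕜 H]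
    (L : G →L[𝕜] H) {F : E → G} {p : E} (h : ∀ᶠ q in 𝓝 p, L (F q) = 0) (v : E) :
    L (fderiv 𝕜 F p v) = 0 := by
  by_cases hF : DifferentiableAt 𝕜 F p
  · have hLF : L.comp (fderiv 𝕜 F p) = 0 := by
      have hLF₀ : (L ∘ F) =ᶠ[𝓝 p] fun _ => 0 := h
      rw [← (L.hasFDerivAt.comp p hF.hasFDerivAt).fderiv, hLF₀.fderiv_eq, fderiv_const_apply]
    exact DFunLike.congr_fun hLF v
  · simp [fderiv_zero_of_not_differentiableAt hF]

theorem Quaternion.imK_fderiv_eq_zero_of_eventually {E : Type*} [NormedAddCommGroup E]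
    [NormedSpace ℝ E] {F : E → Quaternion ℝ} {p : E} (h : ∀ᶠ q in 𝓝 p, (F q).imK = 0) (v : E) :
    (fderiv ℝ F p v).imK = 0 :=
  ContinuousLinearMap.apply_fderiv_eq_zero_of_eventually (𝕜 := ℝ) (F := F)
    ⟨QuaternionAlgebra.imKₗ _ _ _, Quaternion.continuous_imK⟩ h v

theorem quatI_mul_add_quatJ_mul_add_smul_eq_zero_iff {u v f : Quaternion ℝ} (lam : ℝ)
    (hu : u.imK = 0) (hv : v.imK = 0) (hf : f.imK = 0) :
    quatI * u + quatJ * v + lam • f = 0 ↔ u * quatI + v * quatJ + lam • f = 0 := by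
  simp only [Quaternion.ext_iff, Quaternion.re_add, Quaternion.imI_add, Quaternion.imJ_add,
    Quaternion.imK_add, Quaternion.re_mul, Quaternion.imI_mul, Quaternion.imJ_mul,
    Quaternion.imK_mul, Quaternion.re_smul, Quaternion.imI_smul, Quaternion.imJ_smul,
    Quaternion.imK_smul, Quaternion.re_zero, Quaternion.imI_zero, Quaternion.imJ_zero,
    Quaternion.imK_zero, smul_eq_mul, hu, hv, hf]
  simp only [quatI, quatJ]
  grind

theorem metamonogenic_left_iff_right_general (Ω : Set (ℝ × ℝ)) (hΩ : IsOpen Ω) (lam : ℝ)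
    (F : ℝ × ℝ → Quaternion ℝ)
    (hred : ∀ p ∈ Ω, (F p).imK = 0) :
    (∀ p ∈ Ω, diracDLeft F p + lam • F p = 0) ↔
      (∀ p ∈ Ω, diracDRight F p + lam • F p = 0) := by
  refine forall₂_congr fun p hp => ?_
  have hnear : ∀ᶠ q in 𝓝 p, (F q).imK = 0 := eventually_of_mem (hΩ.mem_nhds hp) hred
  exact quatI_mul_add_quatJ_mul_add_smul_eq_zero_iff lam
    (Quaternion.imK_fderiv_eq_zero_of_eventually hnear _)
    (Quaternion.imK_fderiv_eq_zero_of_eventually hnear _) (hred p hp)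

/-- For a reduced quaternion-valued `C¹` function `F` on an open set `Ω ⊆ ℝ²`,
the equation `DF + λF = 0` holds on `Ω` iff `FD + λF = 0` holds on `Ω`. -/
theorem metamonogenic_left_iff_right (Ω : Set (ℝ × ℝ)) (hΩ : IsOpen Ω) (lam : ℝ)
    (F : ℝ × ℝ → Quaternion ℝ) (hF : ContDiffOn ℝ 1 F Ω)
    (hred : ∀ p ∈ Ω, (F p).imK = 0) :
    (∀ p ∈ Ω, diracDLeft F p + lam • F p = 0) ↔
      (∀ p ∈ Ω, diracDRight F p + lam • F p = 0) :=
  metamonogenic_left_iff_right_general Ω hΩ lam F hred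
end

section
/- Let λ ∈ ℝ \ {0} and let h : Ω → ℝ be a C² solution of the Helmholtz equation Δh + λ²h = 0 on an open set Ω ⊆ ℝ². Then the reduced quaternion-valued function F = −(1/λ)(D − λ)h = h − (1/λ)(i ∂h/∂x + j ∂h/∂y) satisfies DF + λF = 0 and its scalar part equals h. -/
/-- The reduced quaternion-valued function `F = −(1/λ)(D − λ)h = h − (1/λ)(i hₓ + j h_y)`
obtained from a real-valued `h`. -/
noncomputable def metaExt (lam : ℝ) (h : ℝ × ℝ → ℝ) (q : ℝ × ℝ) : Quaternion ℝ :=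
  ⟨h q, -(1 / lam) * fderiv ℝ h q (1, 0), -(1 / lam) * fderiv ℝ h q (0, 1), 0⟩

/-!
Write `F = h − (1/λ) Dh` with `Dh = i hₓ + j h_y`. On `C²` functions `D² = −Δ`: `i² = j² = −1`,
and the `k`-part of `D²h` is `h_yx − h_xy`, which vanishes by the symmetry of second derivatives.
So `DF = Dh + (1/λ) Δh`, and `DF + λF = (1/λ)(Δh + λ² h) = 0`.
-/

open Quaternion

theorem fderiv_fderiv_apply {E F : Type*} [NormedAddCommGroup E] [NormedSpace ℝ E]
    [NormedAddCommGroup F] [NormedSpace ℝ F] {f : E → F} {p : E}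
    (hf : DifferentiableAt ℝ (fderiv ℝ f) p) (v w : E) :
    fderiv ℝ (fun q => fderiv ℝ f q v) p w = fderiv ℝ (fderiv ℝ f) p w v := by
  simp [fderiv_clm_apply hf (differentiableAt_const v)]

theorem diracD_reduced {f₀ f₁ f₂ : ℝ × ℝ → ℝ} {p : ℝ × ℝ} (h₀ : DifferentiableAt ℝ f₀ p)
    (h₁ : DifferentiableAt ℝ f₁ p) (h₂ : DifferentiableAt ℝ f₂ p) :
    diracD (fun q => f₀ q • (1 : ℍ) + f₁ q • quatI + f₂ q • quatJ) p =
      (-(fderiv ℝ f₁ p (1, 0) + fderiv ℝ f₂ p (0, 1))) • 1 + fderiv ℝ f₀ p (1, 0) • quatI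
        + fderiv ℝ f₀ p (0, 1) • quatJ
        + (fderiv ℝ f₂ p (1, 0) - fderiv ℝ f₁ p (0, 1)) • (quatI * quatJ) := by
  have hF : HasFDerivAt (fun q => f₀ q • (1 : ℍ) + f₁ q • quatI + f₂ q • quatJ)
      ((fderiv ℝ f₀ p).smulRight 1 + (fderiv ℝ f₁ p).smulRight quatI
        + (fderiv ℝ f₂ p).smulRight quatJ) p :=
    ((h₀.hasFDerivAt.smul_const 1).add (h₁.hasFDerivAt.smul_const quatI)).add
      (h₂.hasFDerivAt.smul_const quatJ)
  rw [diracD, hF.fderiv]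
  ext <;> simp <;> simp [quatI, quatJ] <;> ring

theorem metaExt_eq_reduced (lam : ℝ) (h : ℝ × ℝ → ℝ) :
    metaExt lam h = fun q => h q • (1 : ℍ) + (-(1 / lam) * fderiv ℝ h q (1, 0)) • quatI
      + (-(1 / lam) * fderiv ℝ h q (0, 1)) • quatJ := by
  funext q
  ext <;> simp <;> simp [metaExt, quatI, quatJ]

theorem diracD_metaExt (lam : ℝ) {h : ℝ × ℝ → ℝ} {p : ℝ × ℝ} (hC2 : ContDiffAt ℝ 2 h p) :
    diracD (metaExt lam h) p =
      (1 / lam * (fderiv ℝ (fun q => fderiv ℝ h q (1, 0)) p (1, 0) +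
          fderiv ℝ (fun q => fderiv ℝ h q (0, 1)) p (0, 1))) • 1
        + fderiv ℝ h p (1, 0) • quatI + fderiv ℝ h p (0, 1) • quatJ := by
  have hd : DifferentiableAt ℝ h p := hC2.differentiableAt two_ne_zero
  have hd2 : DifferentiableAt ℝ (fderiv ℝ h) p :=
    (hC2.fderiv_right le_rfl).differentiableAt one_ne_zero
  have hpartial (v : ℝ × ℝ) : DifferentiableAt ℝ (fun q => fderiv ℝ h q v) p :=
    hd2.clm_apply (differentiableAt_const v)
  have hsymm := hC2.isSymmSndFDerivAt (by simp) (1, 0) (0, 1)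
  rw [metaExt_eq_reduced, diracD_reduced hd ((hpartial _).const_mul _) ((hpartial _).const_mul _)]
  simp only [fderiv_const_mul (hpartial (1, 0)), fderiv_const_mul (hpartial (0, 1)), smul_apply,
    fderiv_fderiv_apply hd2, hsymm]
  match_scalars <;> ring

/-- If `h` is a real `C²` solution of the Helmholtz equation `Δh + λ²h = 0` on an open
set `Ω ⊆ ℝ²` and `λ ≠ 0`, then `F = −(1/λ)(D − λ)h` satisfies `DF + λF = 0` on `Ω`
and its scalar part equals `h`. -/
theorem helmholtz_to_metamonogenic (Ω : Set (ℝ × ℝ)) (hΩ : IsOpen Ω) (lam : ℝ)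
    (hlam : lam ≠ 0) (h : ℝ × ℝ → ℝ) (hh : ContDiffOn ℝ 2 h Ω)
    (hHelm : ∀ p ∈ Ω,
      fderiv ℝ (fun q => fderiv ℝ h q (1, 0)) p (1, 0) +
          fderiv ℝ (fun q => fderiv ℝ h q (0, 1)) p (0, 1) + lam ^ 2 * h p = 0) :
    ∀ p ∈ Ω,
      diracD (metaExt lam h) p + lam • metaExt lam h p = 0 ∧ (metaExt lam h p).re = h p := by
  intro p hp
  refine ⟨?_, rfl⟩
  have hΔ := hHelm p hp
  rw [diracD_metaExt lam (hh.contDiffAt (hΩ.mem_nhds hp)), metaExt_eq_reduced]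
  match_scalars <;> field_simp
  · linear_combination hΔ
  · ring
  · ring
end

section
/- Suppose h₁, h₂ : Ω → ℝ are C² solutions of Δh + λ²h = 0 with the same values, and F₁ = −(1/λ)(D−λ)h₁, F₂ = −(1/λ)(D−λ)h₂. If h₁ = h₂ on Ω then F₁ = F₂; consequently a λ-metamonogenic reduced quaternion-valued function on a connected open set is uniquely determined by its scalar part. -/
/-! The `i`- and `j`-components of `DF + λF = 0` read `∂ₓ(Sc F) + ∂ᵧF_k + λF_i = 0` and
`-∂ₓF_k + ∂ᵧ(Sc F) + λF_j = 0`. Since `F_k ≡ 0`, its derivatives vanish, so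
`F = Sc F - (1/λ)(i ∂ₓ + j ∂ᵧ) Sc F = metaExt λ (Sc F)`, which only depends on the germ of
`Sc F`. -/

open Filter Topology

namespace Quaternion

noncomputable def reCLM : Quaternion ℝ →L[ℝ] ℝ :=
  { QuaternionAlgebra.reₗ (-1 : ℝ) (0 : ℝ) (-1 : ℝ) with cont := continuous_re }

noncomputable def imKCLM : Quaternion ℝ →L[ℝ] ℝ :=
  { QuaternionAlgebra.imKₗ (-1 : ℝ) (0 : ℝ) (-1 : ℝ) with cont := continuous_imK }

end Quaternion

section Components

variable {E : Type*} [NormedAddCommGroup E] [NormedSpace ℝ E] {F : E → Quaternion ℝ} {p : E}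

theorem fderiv_re_apply (hF : DifferentiableAt ℝ F p) (v : E) :
    fderiv ℝ (fun q => (F q).re) p v = (fderiv ℝ F p v).re :=
  congrArg (· v) (Quaternion.reCLM.hasFDerivAt.comp p hF.hasFDerivAt).fderiv

theorem fderiv_imK_apply_eq_zero (hF : DifferentiableAt ℝ F p)
    (hK : ∀ᶠ q in 𝓝 p, (F q).imK = 0) (v : E) : (fderiv ℝ F p v).imK = 0 := by
  have hzero : HasFDerivAt (fun q => (F q).imK) (0 : E →L[ℝ] ℝ) p :=
    (hasFDerivAt_const (0 : ℝ) p).congr_of_eventuallyEq hK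
  have hcomp := Quaternion.imKCLM.hasFDerivAt.comp p hF.hasFDerivAt
  exact congrArg (· v) (hcomp.unique hzero)

end Components

theorem diracD_imI (F : ℝ × ℝ → Quaternion ℝ) (p : ℝ × ℝ) :
    (diracD F p).imI = (fderiv ℝ F p (1, 0)).re + (fderiv ℝ F p (0, 1)).imK := by
  simp only [diracD, Quaternion.imI_add, Quaternion.imI_mul]
  simp [quatI, quatJ]

theorem diracD_imJ (F : ℝ × ℝ → Quaternion ℝ) (p : ℝ × ℝ) :
    (diracD F p).imJ = -(fderiv ℝ F p (1, 0)).imK + (fderiv ℝ F p (0, 1)).re := by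
  simp only [diracD, Quaternion.imJ_add, Quaternion.imJ_mul]
  simp [quatI, quatJ]

theorem Filter.EventuallyEq.metaExt_eq {h₁ h₂ : ℝ × ℝ → ℝ} {p : ℝ × ℝ} (h : h₁ =ᶠ[𝓝 p] h₂)
    (lam : ℝ) : metaExt lam h₁ p = metaExt lam h₂ p := by
  unfold metaExt
  rw [h.eq_of_nhds, h.fderiv_eq]

theorem eq_metaExt_re_of_diracD_add_smul_eq_zero {F : ℝ × ℝ → Quaternion ℝ} {p : ℝ × ℝ}
    {lam : ℝ} (hlam : lam ≠ 0) (hF : DifferentiableAt ℝ F p)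
    (hK : ∀ᶠ q in 𝓝 p, (F q).imK = 0) (hD : diracD F p + lam • F p = 0) :
    F p = metaExt lam (fun q => (F q).re) p := by
  have hI := congrArg QuaternionAlgebra.imI hD
  have hJ := congrArg QuaternionAlgebra.imJ hD
  simp only [Quaternion.imI_add, Quaternion.imJ_add, Quaternion.imI_smul, Quaternion.imJ_smul,
    Quaternion.imI_zero, Quaternion.imJ_zero, diracD_imI, diracD_imJ,
    fderiv_imK_apply_eq_zero hF hK, smul_eq_mul] at hI hJ
  ext
  · rfl
  · simp only [metaExt, fderiv_re_apply hF]
    field_simp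
    linarith
  · simp only [metaExt, fderiv_re_apply hF]
    field_simp
    linarith
  · exact hK.self_of_nhds

theorem metamonogenic_determined_by_scalar_part_general (Ω : Set (ℝ × ℝ)) (hΩ : IsOpen Ω)
    (lam : ℝ) (hlam : lam ≠ 0) :
    (∀ h₁ h₂ : ℝ × ℝ → ℝ, ContDiffOn ℝ 2 h₁ Ω → ContDiffOn ℝ 2 h₂ Ω →
      (∀ p ∈ Ω,
        fderiv ℝ (fun q => fderiv ℝ h₁ q (1, 0)) p (1, 0) +
            fderiv ℝ (fun q => fderiv ℝ h₁ q (0, 1)) p (0, 1) + lam ^ 2 * h₁ p = 0) →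
      (∀ p ∈ Ω,
        fderiv ℝ (fun q => fderiv ℝ h₂ q (1, 0)) p (1, 0) +
            fderiv ℝ (fun q => fderiv ℝ h₂ q (0, 1)) p (0, 1) + lam ^ 2 * h₂ p = 0) →
      (∀ p ∈ Ω, h₁ p = h₂ p) → ∀ p ∈ Ω, metaExt lam h₁ p = metaExt lam h₂ p) ∧
    (∀ F G : ℝ × ℝ → Quaternion ℝ, ContDiffOn ℝ 1 F Ω → ContDiffOn ℝ 1 G Ω →
      (∀ p ∈ Ω, (F p).imK = 0) → (∀ p ∈ Ω, (G p).imK = 0) →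
      (∀ p ∈ Ω, diracD F p + lam • F p = 0) →
      (∀ p ∈ Ω, diracD G p + lam • G p = 0) →
      (∀ p ∈ Ω, (F p).re = (G p).re) → ∀ p ∈ Ω, F p = G p) := by
  refine ⟨fun h₁ h₂ _ _ _ _ heq p hp => ?_, fun F G hF hG hFK hGK hFD hGD hre p hp => ?_⟩
  · exact (Set.EqOn.eventuallyEq_of_mem heq (hΩ.mem_nhds hp)).metaExt_eq lam
  · have hΩp := hΩ.mem_nhds hp
    have hext : ∀ H : ℝ × ℝ → Quaternion ℝ, ContDiffOn ℝ 1 H Ω → (∀ p ∈ Ω, (H p).imK = 0) →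
        (∀ p ∈ Ω, diracD H p + lam • H p = 0) → H p = metaExt lam (fun q => (H q).re) p :=
      fun H hH hK hD => eq_metaExt_re_of_diracD_add_smul_eq_zero hlam
        ((hH.contDiffAt hΩp).differentiableAt one_ne_zero) (eventually_of_mem hΩp hK) (hD p hp)
    rw [hext F hF hFK hFD, hext G hG hGK hGD]
    exact (Set.EqOn.eventuallyEq_of_mem (f := fun q => (F q).re) hre hΩp).metaExt_eq lam

/-- If `h₁ = h₂` on `Ω` then `F₁ = −(1/λ)(D−λ)h₁` and `F₂ = −(1/λ)(D−λ)h₂` agree on `Ω`;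
consequently a `λ`-metamonogenic reduced quaternion-valued function on a connected open
set is uniquely determined by its scalar part. -/
theorem metamonogenic_determined_by_scalar_part (Ω : Set (ℝ × ℝ)) (hΩ : IsOpen Ω)
    (hconn : IsConnected Ω) (lam : ℝ) (hlam : lam ≠ 0) :
    (∀ h₁ h₂ : ℝ × ℝ → ℝ, ContDiffOn ℝ 2 h₁ Ω → ContDiffOn ℝ 2 h₂ Ω →
      (∀ p ∈ Ω,
        fderiv ℝ (fun q => fderiv ℝ h₁ q (1, 0)) p (1, 0) +
            fderiv ℝ (fun q => fderiv ℝ h₁ q (0, 1)) p (0, 1) + lam ^ 2 * h₁ p = 0) →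
      (∀ p ∈ Ω,
        fderiv ℝ (fun q => fderiv ℝ h₂ q (1, 0)) p (1, 0) +
            fderiv ℝ (fun q => fderiv ℝ h₂ q (0, 1)) p (0, 1) + lam ^ 2 * h₂ p = 0) →
      (∀ p ∈ Ω, h₁ p = h₂ p) → ∀ p ∈ Ω, metaExt lam h₁ p = metaExt lam h₂ p) ∧
    (∀ F G : ℝ × ℝ → Quaternion ℝ, ContDiffOn ℝ 1 F Ω → ContDiffOn ℝ 1 G Ω →
      (∀ p ∈ Ω, (F p).imK = 0) → (∀ p ∈ Ω, (G p).imK = 0) →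
      (∀ p ∈ Ω, diracD F p + lam • F p = 0) →
      (∀ p ∈ Ω, diracD G p + lam • G p = 0) →
      (∀ p ∈ Ω, (F p).re = (G p).re) → ∀ p ∈ Ω, F p = G p) :=
  metamonogenic_determined_by_scalar_part_general Ω hΩ lam hlam
end
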